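/- arXiv:2303.00035 — 2 statements merged into one kernel-verified Lean document; each statement's English description precedes it below -/
import Mathlib

section
/- Let X ~ N(0, σ²) (one-dimensional), let Δ > 0, and let 0 < ε ≤ 1. If σ ≥ (Δ/ε)√(2 ln(1.25/δ)), then P(X > σ²ε/Δ − Δ/2) ≤ δ, where this is the probability that the privacy loss of the Gaussian mechanism exceeds ε. -/
set_option maxHeartbeats 1000000

open MeasureTheory ProbabilityTheory Real Set Filter

lemma gm_exp_form (v x : ℝ) :
    rexp (-x ^ 2 / (2 * v)) = rexp (-(2 * v)⁻¹ * x ^ 2) := by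
  congr 1; ring

lemma gm_integrable (v : ℝ) (hv : 0 < v) :
    Integrable (fun x : ℝ => (Real.sqrt (2 * π * v))⁻¹ * rexp (-x ^ 2 / (2 * v))) := by
  simp_rw [gm_exp_form]
  exact (integrable_exp_neg_mul_sq (by positivity)).const_mul _

lemma gm_integral_mul_exp (b t : ℝ) (hb : 0 < b) :
    ∫ x in Set.Ioi t, x * rexp (-b * x ^ 2) = rexp (-b * t ^ 2) / (2 * b) := by
  have hderiv : ∀ x ∈ Set.Ici t, HasDerivAt (fun y : ℝ => -rexp (-b * y ^ 2) / (2 * b))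
      (x * rexp (-b * x ^ 2)) x := by
    intro x _
    have h1 : HasDerivAt (fun y : ℝ => -b * y ^ 2) (-b * (2 * x)) x := by
      simpa using (hasDerivAt_pow 2 x).const_mul (-b)
    have h2 := (h1.exp.neg).div_const (2 * b)
    refine h2.congr_deriv ?_
    rw [div_eq_iff (by positivity)]
    ring
  have hint : IntegrableOn (fun x : ℝ => x * rexp (-b * x ^ 2)) (Set.Ioi t) :=
    (integrable_mul_exp_neg_mul_sq hb).integrableOn
  have htend : Tendsto (fun y : ℝ => -rexp (-b * y ^ 2) / (2 * b)) atTop (nhds 0) := by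
    have h3 : Tendsto (fun y : ℝ => -b * y ^ 2) atTop atBot := by
      have h4 : Tendsto (fun y : ℝ => b * y ^ 2) atTop atTop :=
        (tendsto_pow_atTop (by norm_num)).const_mul_atTop hb
      have := tendsto_neg_atTop_atBot.comp h4
      simpa [Function.comp_def, neg_mul] using this
    have := ((Real.tendsto_exp_atBot.comp h3).neg).div_const (2 * b)
    simpa [Function.comp] using this
  rw [MeasureTheory.integral_Ioi_of_hasDerivAt_of_tendsto' hderiv hint htend]
  ring

lemma gm_half (v : ℝ) (hv : 0 < v) :
    ∫ x in Set.Ioi (0:ℝ), (Real.sqrt (2 * π * v))⁻¹ * rexp (-x ^ 2 / (2 * v)) = 1 / 2 := by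
  simp_rw [gm_exp_form]
  rw [integral_const_mul, integral_gaussian_Ioi]
  have h1 : π / (2 * v)⁻¹ = 2 * π * v := by field_simp
  rw [h1]
  have h2 : Real.sqrt (2 * π * v) ≠ 0 := by positivity
  field_simp

lemma gm_tail (v t : ℝ) (hv : 0 < v) (ht : 0 < t) :
    ∫ x in Set.Ioi t, (Real.sqrt (2 * π * v))⁻¹ * rexp (-x ^ 2 / (2 * v))
      ≤ (Real.sqrt (2 * π * v))⁻¹ * ((v / t) * rexp (-t ^ 2 / (2 * v))) := by
  simp_rw [gm_exp_form]
  rw [integral_const_mul]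
  have hb : 0 < (2 * v)⁻¹ := by positivity
  have hs : (0:ℝ) ≤ (Real.sqrt (2 * π * v))⁻¹ := by positivity
  apply mul_le_mul_of_nonneg_left _ hs
  have hmono : ∫ x in Set.Ioi t, rexp (-(2 * v)⁻¹ * x ^ 2)
      ≤ ∫ x in Set.Ioi t, (x / t) * rexp (-(2 * v)⁻¹ * x ^ 2) := by
    apply setIntegral_mono_on
    · exact (integrable_exp_neg_mul_sq hb).integrableOn
    · have : IntegrableOn (fun x : ℝ => x * rexp (-(2 * v)⁻¹ * x ^ 2)) (Set.Ioi t) :=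
        (integrable_mul_exp_neg_mul_sq hb).integrableOn
      have := this.div_const t
      simp [div_mul_eq_mul_div] at this ⊢; exact this
    · exact measurableSet_Ioi
    · intro x hx
      have hx1 : (1:ℝ) ≤ x / t := (le_div_iff₀ ht).mpr (by simpa using (le_of_lt hx))
      nlinarith [Real.exp_pos (-(2 * v)⁻¹ * x ^ 2)]
  refine hmono.trans ?_
  have : ∫ x in Set.Ioi t, (x / t) * rexp (-(2 * v)⁻¹ * x ^ 2)
      = (∫ x in Set.Ioi t, x * rexp (-(2 * v)⁻¹ * x ^ 2)) / t := by
    rw [← integral_div]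
    congr 1
    funext x
    ring
  rw [this, gm_integral_mul_exp _ _ hb]
  apply le_of_eq
  have : -(2 * v)⁻¹ * t ^ 2 = -t ^ 2 / (2 * v) := by ring
  rw [this]
  field_simp

lemma gm_neg (v t : ℝ) (hv : 0 < v) (ht : t ≤ 0) :
    ∫ x in Set.Ioi t, (Real.sqrt (2 * π * v))⁻¹ * rexp (-x ^ 2 / (2 * v))
      ≤ 1 / 2 + (-t) * (Real.sqrt (2 * π * v))⁻¹ := by
  have hint := gm_integrable v hv
  have hunion : Set.Ioc t 0 ∪ Set.Ioi (0:ℝ) = Set.Ioi t := Set.Ioc_union_Ioi_eq_Ioi ht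
  rw [← hunion, setIntegral_union Set.Ioc_disjoint_Ioi_same measurableSet_Ioi
    hint.integrableOn hint.integrableOn, gm_half v hv]
  have h1 : ∫ x in Set.Ioc t 0, (Real.sqrt (2 * π * v))⁻¹ * rexp (-x ^ 2 / (2 * v))
      ≤ ∫ _x in Set.Ioc t 0, (Real.sqrt (2 * π * v))⁻¹ := by
    apply setIntegral_mono_on hint.integrableOn
      (integrableOn_const measure_Ioc_lt_top.ne) measurableSet_Ioc
    intro x _
    have he : rexp (-x ^ 2 / (2 * v)) ≤ 1 := Real.exp_le_one_iff.mpr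
      (div_nonpos_of_nonpos_of_nonneg (by nlinarith [sq_nonneg x]) (by positivity))
    exact mul_le_of_le_one_right (inv_nonneg.mpr (Real.sqrt_nonneg (2 * π * v))) he
  have h2 : ∫ _x in Set.Ioc t 0, (Real.sqrt (2 * π * v))⁻¹
      = (-t) * (Real.sqrt (2 * π * v))⁻¹ := by
    rw [setIntegral_const, measureReal_def, Real.volume_Ioc, ENNReal.toReal_ofReal (by linarith), smul_eq_mul]
    ring
  rw [h2] at h1
  linarith

open NNReal

/-- Tail-bound core of the Gaussian mechanism proof: if
`σ ≥ (Δ/ε)√(2 ln(1.25/δ))` and `ε ≤ 1`, then for `X ~ N(0, σ²)`,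
`P(X > σ²ε/Δ − Δ/2) ≤ δ`. -/
theorem gaussian_mechanism_tail_bound
    (σ Δ ε δ : ℝ) (hΔ : 0 < Δ) (hδ : 0 < δ ∧ δ < 1) (hε : 0 < ε) (hε1 : ε ≤ 1)
    (hσ : (Δ / ε) * Real.sqrt (2 * Real.log (1.25 / δ)) ≤ σ) :
    gaussianReal 0 (Real.toNNReal (σ ^ 2)) {x : ℝ | σ ^ 2 * ε / Δ - Δ / 2 < x} ≤
      ENNReal.ofReal δ := by
  obtain ⟨hδ0, hδ1⟩ := hδ
  obtain ⟨L, hLdef⟩ : ∃ L, L = Real.log (1.25 / δ) := ⟨_, rfl⟩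
  rw [← hLdef] at hσ
  have h125 : (1.25:ℝ) ≤ 1.25 / δ := by rw [le_div_iff₀ hδ0]; nlinarith
  have hlog125 : (0.2:ℝ) ≤ Real.log 1.25 := by
    rw [Real.le_log_iff_exp_le (by norm_num)]
    have h := Real.add_one_le_exp (-(0.2:ℝ))
    have hp := Real.exp_pos (0.2:ℝ)
    rw [Real.exp_neg] at h
    have h2 : rexp 0.2 * (rexp 0.2)⁻¹ = 1 := mul_inv_cancel₀ hp.ne'
    nlinarith
  have hL02 : (0.2:ℝ) ≤ L := by
    rw [hLdef]
    exact hlog125.trans ((Real.log_le_log_iff (by norm_num) (by positivity)).mpr h125)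
  have hδeq : δ = 1.25 * Real.exp (-L) := by
    rw [Real.exp_neg, hLdef, Real.exp_log (by positivity)]
    field_simp
  have hsqL : 0 < Real.sqrt (2 * L) := Real.sqrt_pos.mpr (by linarith)
  have hσ0 : 0 < σ := lt_of_lt_of_le (by positivity) hσ
  have hσ2 : (0:ℝ) < σ ^ 2 := by positivity
  obtain ⟨c, hcdef⟩ : ∃ c, c = σ * ε / Δ := ⟨_, rfl⟩
  have hc0 : 0 < c := by rw [hcdef]; positivity
  have hc : Real.sqrt (2 * L) ≤ c := by
    have heq : Real.sqrt (2 * L) = ((Δ / ε) * Real.sqrt (2 * L)) * (ε / Δ) := by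
      field_simp
    rw [heq, hcdef, show σ * ε / Δ = σ * (ε / Δ) by ring]
    exact mul_le_mul_of_nonneg_right hσ (by positivity)
  have h2L : 2 * L ≤ c ^ 2 := by
    have h := Real.sq_sqrt (show (0:ℝ) ≤ 2 * L by linarith)
    nlinarith [Real.sqrt_nonneg (2 * L)]
  obtain ⟨r, hrdef⟩ : ∃ r, r = c - ε / (2 * c) := ⟨_, rfl⟩
  obtain ⟨t, htdef⟩ : ∃ t, t = σ ^ 2 * ε / Δ - Δ / 2 := ⟨_, rfl⟩
  have htr : t = σ * r := by
    rw [htdef, hrdef, hcdef]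
    field_simp
  -- rewrite the measure as a real integral
  have hvne : Real.toNNReal (σ ^ 2) ≠ 0 := by
    simp only [ne_eq, Real.toNNReal_eq_zero, not_le]
    positivity
  have hv : ((Real.toNNReal (σ ^ 2) : ℝ≥0) : ℝ) = σ ^ 2 :=
    Real.coe_toNNReal _ (sq_nonneg σ)
  have hset : {x : ℝ | σ ^ 2 * ε / Δ - Δ / 2 < x} = Set.Ioi t := by rw [htdef]; rfl
  rw [hset, gaussianReal_apply_eq_integral 0 hvne]
  apply ENNReal.ofReal_le_ofReal
  have hpdf : ∀ x : ℝ, gaussianPDFReal 0 (Real.toNNReal (σ ^ 2)) x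
      = (Real.sqrt (2 * π * σ ^ 2))⁻¹ * rexp (-x ^ 2 / (2 * σ ^ 2)) := by
    intro x
    rw [gaussianPDFReal, hv]
    ring_nf
  simp only [hpdf]
  -- numeric facts
  have hsqrtmul : Real.sqrt (2 * π * σ ^ 2) = Real.sqrt (2 * π) * σ := by
    rw [Real.sqrt_mul (by positivity), Real.sqrt_sq hσ0.le]
  have hsqrt25 : (2.5:ℝ) ≤ Real.sqrt (2 * π) := by
    have h1 : Real.sqrt 6.25 = 2.5 := by
      rw [show (6.25:ℝ) = 2.5 ^ 2 by norm_num, Real.sqrt_sq (by norm_num)]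
    rw [← h1]
    exact Real.sqrt_le_sqrt (by nlinarith [Real.pi_gt_d6])
  have hsπ : 0 < Real.sqrt (2 * π) := by linarith
  rcases le_or_gt 0.6 r with hr | hr
  · -- main case: tail bound
    have hr0 : (0:ℝ) < r := lt_of_lt_of_le (by norm_num) hr
    have ht0 : 0 < t := by rw [htr]; exact mul_pos hσ0 hr0
    have htail := gm_tail (σ ^ 2) t hσ2 ht0
    refine htail.trans ?_
    have hexpeq : -t ^ 2 / (2 * σ ^ 2) = -r ^ 2 / 2 := by
      rw [htr]; field_simp
    have hcoefeq : (Real.sqrt (2 * π * σ ^ 2))⁻¹ * (σ ^ 2 / t)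
        = (Real.sqrt (2 * π) * r)⁻¹ := by
      rw [hsqrtmul, htr]
      field_simp
    rw [← mul_assoc, hcoefeq, hexpeq]
    -- now: (√(2π) r)⁻¹ * exp (-r²/2) ≤ δ
    have hr2 : 2 * L - 1 ≤ r ^ 2 := by
      have hexpand : r ^ 2 = c ^ 2 - ε + (ε / (2 * c)) ^ 2 := by
        rw [hrdef]; field_simp; ring
      linarith [sq_nonneg (ε / (2 * c)), hexpand, h2L, hε1]
    have hehalf : rexp (-r ^ 2 / 2) ≤ rexp (1 / 2) * rexp (-L) := by
      rw [← Real.exp_add]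
      exact Real.exp_le_exp.mpr (by linarith)
    have hexp12 : rexp ((1:ℝ) / 2) ≤ 5 / 3 := by
      have h1 : rexp ((1:ℝ) / 2) * rexp ((1:ℝ) / 2) = rexp 1 := by
        rw [← Real.exp_add]; norm_num
      nlinarith [Real.exp_one_lt_d9, Real.exp_pos ((1:ℝ) / 2)]
    have hcoef : (Real.sqrt (2 * π) * r)⁻¹ ≤ (1.5:ℝ)⁻¹ := by
      apply inv_anti₀ (by norm_num)
      nlinarith
    calc (Real.sqrt (2 * π) * r)⁻¹ * rexp (-r ^ 2 / 2)
        ≤ (1.5:ℝ)⁻¹ * (rexp (1 / 2) * rexp (-L)) := by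
          apply mul_le_mul hcoef hehalf (Real.exp_pos _).le (by norm_num)
      _ ≤ δ := by
          rw [hδeq]
          nlinarith [Real.exp_pos (-L)]
  · -- small r case
    have hrc : c - 1 / (2 * c) ≤ r := by
      rw [hrdef]
      have h1 : ε / (2 * c) ≤ 1 / (2 * c) := by
        apply div_le_div_of_nonneg_right ?_ ?_ |>.trans_eq rfl
        all_goals first | exact hε1 | positivity
      linarith
    have hcb : c ^ 2 < 0.6 * c + 0.5 := by
      have h1 : c - 1 / (2 * c) < 0.6 := lt_of_le_of_lt hrc hr
      have h2 := mul_lt_mul_of_pos_right h1 (show (0:ℝ) < 2 * c by positivity)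
      have h3 : (c - 1 / (2 * c)) * (2 * c) = 2 * c ^ 2 - 1 := by field_simp
      nlinarith [h2, h3]
    have hL06 : L ≤ 0.6 := by nlinarith [sq_nonneg (c - 1.07)]
    have hδhalf : 1 / 2 ≤ δ := by
      have hee : rexp (-(0.6:ℝ)) ≤ rexp (-L) := Real.exp_le_exp.mpr (by linarith)
      have h04 : (0.4:ℝ) ≤ rexp (-(0.6:ℝ)) := by
        nlinarith [Real.add_one_le_exp (-(0.6:ℝ))]
      rw [hδeq]; nlinarith
    rcases lt_or_ge 0 r with hr0 | hr0
    · -- 0 < r < 0.6 : bound by 1/2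
      have ht0 : 0 < t := by rw [htr]; exact mul_pos hσ0 hr0
      have hmono : ∫ x in Set.Ioi t, (Real.sqrt (2 * π * σ ^ 2))⁻¹ * rexp (-x ^ 2 / (2 * σ ^ 2))
          ≤ ∫ x in Set.Ioi (0:ℝ), (Real.sqrt (2 * π * σ ^ 2))⁻¹ * rexp (-x ^ 2 / (2 * σ ^ 2)) := by
        apply setIntegral_mono_set (gm_integrable _ hσ2).integrableOn
          (ae_of_all _ fun x => by positivity)
          (HasSubset.Subset.eventuallyLE (Set.Ioi_subset_Ioi ht0.le))
      rw [gm_half _ hσ2] at hmono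
      linarith
    · -- r ≤ 0, t ≤ 0
      have ht0 : t ≤ 0 := by
        rw [htr]; exact mul_nonpos_iff.mpr (Or.inl ⟨hσ0.le, hr0⟩)
      refine (gm_neg (σ ^ 2) t hσ2 ht0).trans ?_
      have hLq : L ≤ 1 / 4 := by
        have h2 : 2 * c ^ 2 ≤ ε := by
          have h3 : c ≤ ε / (2 * c) := by rw [hrdef] at hr0; linarith
          rw [le_div_iff₀ (by positivity)] at h3
          nlinarith
        nlinarith
      have hδ93 : (0.93:ℝ) ≤ δ := by
        have h75 : (0.75:ℝ) ≤ rexp (-(1/4:ℝ)) := by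
          nlinarith [Real.add_one_le_exp (-(1/4:ℝ))]
        have hmon : rexp (-(1/4:ℝ)) ≤ rexp (-L) := Real.exp_le_exp.mpr (by linarith)
        rw [hδeq]; nlinarith
      have hc632 : (0.632:ℝ) ≤ c := by
        have h1 : Real.sqrt 0.4 ≤ Real.sqrt (2 * L) := Real.sqrt_le_sqrt (by linarith)
        have h2 : (0.632:ℝ) ≤ Real.sqrt 0.4 :=
          (Real.le_sqrt (by norm_num) (by norm_num)).mpr (by norm_num)
        linarith
    -- -r ≤ 0.16
      have hnegr : -r ≤ 0.16 := by
        have h1 : ε / (2 * c) ≤ 1 / (2 * c) :=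
          div_le_div_of_nonneg_right hε1 (by positivity) |>.trans_eq rfl
        have h2 : 1 / (2 * c) ≤ 1 / (2 * 0.632) :=
          one_div_le_one_div_of_le (by norm_num) (by linarith)
        have h3 : (1:ℝ) / (2 * 0.632) ≤ 0.792 := by norm_num
        rw [hrdef]
        linarith
      have key : (-t) * (Real.sqrt (2 * π * σ ^ 2))⁻¹ ≤ 0.064 := by
        rw [hsqrtmul, htr]
        have heq2 : -(σ * r) * (Real.sqrt (2 * π) * σ)⁻¹ = (-r) * (Real.sqrt (2 * π))⁻¹ := by
          field_simp
        rw [heq2]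
        have hinv : (Real.sqrt (2 * π))⁻¹ ≤ 0.4 := by
          have h5 : (0.4:ℝ)⁻¹ ≤ Real.sqrt (2 * π) := by
            rw [show (0.4:ℝ)⁻¹ = 2.5 by norm_num]
            exact hsqrt25
          have := inv_anti₀ (by norm_num) h5
          simpa using this
        have hnr0 : 0 ≤ -r := by linarith
        calc (-r) * (Real.sqrt (2 * π))⁻¹ ≤ 0.16 * 0.4 :=
          mul_le_mul hnegr hinv (by positivity) (by norm_num)
        _ = 0.064 := by norm_num
      linarith
end

section
/- Let τ_1,…,τ_n, {τ_{ij}}_{i,j} be Bernoulli link variables with means p_i, p_{ij}, with τ_{il}τ_i and τ_{li}τ_l the only correlated pairs (E[τ_{il}τ_{li}] = E_{il}), all other links independent. Let c_{ij} ∈ ℝ^d be fixed and let Y = ∑_{i,j} τ_j τ_{ij} c_{ij}. Then E∥Y − E Y∥² = ∑_j p_j(1−p_j) ∥∑_i p_{ij} c_{ij}∥² + ∑_{i,j} p_j p_{ij}(1−p_{ij}) ∥c_{ij}∥² + ∑_{i≠l} p_i p_l (E_{il} − p_{il}p_{li}) c_{li}ᵀ c_{il}. -/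
open MeasureTheory ProbabilityTheory Finset

/-- Exact variance decomposition for the topology-induced variance of PriCER:
server links `τ_j ~ Ber(p_j)` and node-node links `τ_{ij} ~ Ber(p_{ij})` are
independent except that the reciprocal pair `(τ_{il}, τ_{li})` may be correlated with
`E[τ_{il}τ_{li}] = E_{il}`. For fixed vectors `c_{ij}` and
`Y = ∑_{i,j} τ_j τ_{ij} c_{ij}`,
`E‖Y − EY‖² = ∑_j p_j(1−p_j)‖∑_i p_{ij} c_{ij}‖² + ∑_{i,j} p_j p_{ij}(1−p_{ij})‖c_{ij}‖²
  + ∑_{i≠l} p_i p_l (E_{il} − p_{il}p_{li}) c_{li}ᵀ c_{il}`. -/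
theorem topology_induced_variance_decomposition
    {Ω : Type*} [MeasurableSpace Ω] (μ : Measure Ω) [IsProbabilityMeasure μ]
    (n d : ℕ) (τ : Fin n → Ω → ℝ) (T : Fin n → Fin n → Ω → ℝ)
    (p : Fin n → ℝ) (P E : Fin n → Fin n → ℝ)
    (hτmeas : ∀ j, Measurable (τ j)) (hTmeas : ∀ i j, Measurable (T i j))
    (hτval : ∀ j ω, τ j ω = 0 ∨ τ j ω = 1) (hTval : ∀ i j ω, T i j ω = 0 ∨ T i j ω = 1)
    (hτmean : ∀ j, ∫ ω, τ j ω ∂μ = p j) (hTmean : ∀ i j, ∫ ω, T i j ω ∂μ = P i j)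
    (hE : ∀ i l, ∫ ω, T i l ω * T l i ω ∂μ = E i l)
    (hindep : iIndepFun
      (β := Sum.elim (fun _ : Fin n => ℝ) (fun _ : {q : Fin n × Fin n // q.1 ≤ q.2} => ℝ × ℝ))
      (m := fun k => match k with
        | Sum.inl _ => (inferInstance : MeasurableSpace ℝ)
        | Sum.inr _ => (inferInstance : MeasurableSpace (ℝ × ℝ)))
      (fun k => match k with
        | Sum.inl j => τ j
        | Sum.inr q => fun ω => (T q.1.1 q.1.2 ω, T q.1.2 q.1.1 ω)) μ)
    (c : Fin n → Fin n → EuclideanSpace ℝ (Fin d)) :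
    ∫ ω, ‖(∑ i, ∑ j, (τ j ω * T i j ω) • c i j) - ∑ i, ∑ j, (p j * P i j) • c i j‖ ^ 2 ∂μ =
      (∑ j, p j * (1 - p j) * ‖∑ i, P i j • c i j‖ ^ 2) +
      (∑ i, ∑ j, p j * P i j * (1 - P i j) * ‖c i j‖ ^ 2) +
      (∑ i, ∑ l ∈ Finset.univ.erase i,
        p i * p l * (E i l - P i l * P l i) * (inner ℝ (c l i) (c i l) : ℝ)) := by
  classical
  -- sorted-pair index and projection
  set q : Fin n → Fin n → {q : Fin n × Fin n // q.1 ≤ q.2} :=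
    fun i j => if h : i ≤ j then ⟨(i, j), h⟩ else ⟨(j, i), le_of_not_ge h⟩ with hqdef
  set pr : Fin n → Fin n → ℝ × ℝ → ℝ := fun i j => if i ≤ j then Prod.fst else Prod.snd with hprdef
  have hprmeas : ∀ i j, Measurable (pr i j) := by
    intro i j; rw [hprdef]; dsimp only; split_ifs <;> measurability
  have hTrep : ∀ i j, T i j = (pr i j) ∘
      (fun ω => (T (q i j).1.1 (q i j).1.2 ω, T (q i j).1.2 (q i j).1.1 ω)) := by
    intro i j; funext ω
    by_cases h : i ≤ j <;> simp [hqdef, hprdef, h]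
  have hq_ne : ∀ i j k l : Fin n, ¬((k, l) = (i, j)) → ¬((k, l) = (j, i)) → q i j ≠ q k l := by
    intro i j k l h1 h2 hq
    rw [hqdef] at hq
    dsimp only at hq
    split_ifs at hq with h h' h' <;>
      simp only [Subtype.mk.injEq, Prod.mk.injEq] at hq <;>
      [exact h1 (by simp [hq.1, hq.2]); exact h2 (by simp [hq.1, hq.2]);
       exact h2 (by simp [hq.1, hq.2]); exact h1 (by simp [hq.1, hq.2])]
  -- independence of distinct T's
  have hTind : ∀ i j k l : Fin n, q i j ≠ q k l → IndepFun (T i j) (T k l) μ := by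
    intro i j k l hne
    have h := hindep.indepFun (i := Sum.inr (q i j)) (j := Sum.inr (q k l))
      (by simpa using hne)
    have h2 := h.comp (hprmeas i j) (hprmeas k l)
    rw [hTrep i j, hTrep k l]
    exact h2
  -- independence of τ's
  have hτind : ∀ j l : Fin n, j ≠ l → IndepFun (τ j) (τ l) μ := by
    intro j l h
    exact hindep.indepFun (i := Sum.inl j) (j := Sum.inl l) (by simpa using h)
  -- independence of τ and T
  have hτTind : ∀ j i₁ j₁ : Fin n, IndepFun (τ j) (T i₁ j₁) μ := by
    intro j i₁ j₁
    have h := hindep.indepFun (i := Sum.inl j) (j := Sum.inr (q i₁ j₁)) (by simp)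
    have h2 := h.comp measurable_id (hprmeas i₁ j₁)
    rw [hTrep i₁ j₁]
    exact h2
  -- block independence
  have hblock0 := fun (a b : Fin n ⊕ {q : Fin n × Fin n // q.1 ≤ q.2})
      (a' b' : Fin n ⊕ {q : Fin n × Fin n // q.1 ≤ q.2}) hak hal hbk hbl =>
    hindep.indepFun_prodMk_prodMk
      (fun k => match k with
        | Sum.inl j => hτmeas j
        | Sum.inr qq => (hTmeas _ _).prodMk (hTmeas _ _))
      a b a' b' hak hal hbk hbl
  have hblock : ∀ j l i₁ j₁ k₁ l₁ : Fin n,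
      IndepFun (fun ω => τ j ω * τ l ω) (fun ω => T i₁ j₁ ω * T k₁ l₁ ω) μ := by
    intro j l i₁ j₁ k₁ l₁
    have h := hblock0 (Sum.inl j) (Sum.inl l) (Sum.inr (q i₁ j₁)) (Sum.inr (q k₁ l₁))
      (by simp) (by simp) (by simp) (by simp)
    have h2 := h.comp (φ := fun x : ℝ × ℝ => x.1 * x.2)
      (ψ := fun z : (ℝ × ℝ) × (ℝ × ℝ) => pr i₁ j₁ z.1 * pr k₁ l₁ z.2)
      (measurable_fst.mul measurable_snd)
      (((hprmeas i₁ j₁).comp measurable_fst).mul ((hprmeas k₁ l₁).comp measurable_snd))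
    have e1 : T i₁ j₁ = fun ω => pr i₁ j₁ (T (q i₁ j₁).1.1 (q i₁ j₁).1.2 ω, T (q i₁ j₁).1.2 (q i₁ j₁).1.1 ω) := hTrep i₁ j₁
    have e2 : T k₁ l₁ = fun ω => pr k₁ l₁ (T (q k₁ l₁).1.1 (q k₁ l₁).1.2 ω, T (q k₁ l₁).1.2 (q k₁ l₁).1.1 ω) := hTrep k₁ l₁
    rw [show (fun ω => T i₁ j₁ ω * T k₁ l₁ ω) = fun ω =>
      pr i₁ j₁ (T (q i₁ j₁).1.1 (q i₁ j₁).1.2 ω, T (q i₁ j₁).1.2 (q i₁ j₁).1.1 ω) *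
      pr k₁ l₁ (T (q k₁ l₁).1.1 (q k₁ l₁).1.2 ω, T (q k₁ l₁).1.2 (q k₁ l₁).1.1 ω) by
        rw [e1, e2]]
    exact h2
  -- integrability of 0/1-valued functions
  have int01 : ∀ f : Ω → ℝ, Measurable f → (∀ ω, f ω = 0 ∨ f ω = 1) → Integrable f μ := by
    intro f hm h01
    refine (integrable_const (1 : ℝ)).mono' hm.aestronglyMeasurable ?_
    refine Filter.Eventually.of_forall fun ω => ?_
    rcases h01 ω with h | h <;> simp [h]
  have mul01 : ∀ {x y : ℝ}, (x = 0 ∨ x = 1) → (y = 0 ∨ y = 1) → (x * y = 0 ∨ x * y = 1) := by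
    rintro x y (rfl | rfl) (rfl | rfl) <;> simp
  have hτint : ∀ j, Integrable (τ j) μ := fun j => int01 _ (hτmeas j) (hτval j)
  have hTint : ∀ i j, Integrable (T i j) μ := fun i j => int01 _ (hTmeas i j) (hTval i j)
  -- expectation of products of τ's
  have hEτ : ∀ j l : Fin n, ∫ ω, τ j ω * τ l ω ∂μ = if j = l then p j else p j * p l := by
    intro j l
    by_cases h : j = l
    · subst h
      rw [if_pos rfl, ← hτmean j]
      congr 1; funext ω; rcases hτval j ω with h | h <;> simp [h]
    · rw [if_neg h, ← hτmean j, ← hτmean l]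
      exact (hτind j l h).integral_mul_eq_mul_integral (hτint j).aestronglyMeasurable (hτint l).aestronglyMeasurable
  -- expectation of products of T's
  have hET : ∀ i j k l : Fin n, ∫ ω, T i j ω * T k l ω ∂μ =
      if (k, l) = (i, j) then P i j else if (k, l) = (j, i) then E i j else P i j * P k l := by
    intro i j k l
    by_cases h1 : (k, l) = (i, j)
    · rw [if_pos h1]
      have hk : k = i := congrArg Prod.fst h1
      have hl : l = j := congrArg Prod.snd h1
      rw [hk, hl, ← hTmean i j]
      congr 1; funext ω; rcases hTval i j ω with h | h <;> simp [h]
    · rw [if_neg h1]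
      by_cases h2 : (k, l) = (j, i)
      · rw [if_pos h2]
        have hk : k = j := congrArg Prod.fst h2
        have hl : l = i := congrArg Prod.snd h2
        rw [hk, hl]
        exact hE i j
      · rw [if_neg h2, ← hTmean i j, ← hTmean k l]
        exact (hTind i j k l (hq_ne i j k l h1 h2)).integral_mul_eq_mul_integral
          (hTint i j).aestronglyMeasurable (hTint k l).aestronglyMeasurable
  -- F and its expectations
  set F : Fin n → Fin n → Ω → ℝ := fun i j ω => τ j ω * T i j ω with hFdef
  have hF01 : ∀ i j ω, F i j ω = 0 ∨ F i j ω = 1 := fun i j ω =>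
    mul01 (hτval j ω) (hTval i j ω)
  have hFmeas : ∀ i j, Measurable (F i j) := fun i j => (hτmeas j).mul (hTmeas i j)
  have hFint : ∀ i j, Integrable (F i j) μ := fun i j => int01 _ (hFmeas i j) (hF01 i j)
  have hMF : ∀ i j, ∫ ω, F i j ω ∂μ = p j * P i j := by
    intro i j
    rw [hFdef]
    rw [show (∫ ω, τ j ω * T i j ω ∂μ) = ∫ ω, (τ j * T i j) ω ∂μ from rfl]
    rw [(hτTind j i j).integral_mul_eq_mul_integral (hτint j).aestronglyMeasurable (hTint i j).aestronglyMeasurable, hτmean, hTmean]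
  have hM : ∀ i j k l : Fin n, ∫ ω, F i j ω * F k l ω ∂μ =
      (∫ ω, τ j ω * τ l ω ∂μ) * ∫ ω, T i j ω * T k l ω ∂μ := by
    intro i j k l
    have hpt : (fun ω => F i j ω * F k l ω) =
        (fun ω => τ j ω * τ l ω) * fun ω => T i j ω * T k l ω := by
      funext ω; rw [hFdef]; dsimp only [Pi.mul_apply]; ring
    rw [show (∫ ω, F i j ω * F k l ω ∂μ) = ∫ ω, ((fun ω => τ j ω * τ l ω) * fun ω => T i j ω * T k l ω) ω ∂μ by rw [← hpt]]
    exact (hblock j l i j k l).integral_mul_eq_mul_integral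
      (int01 _ ((hτmeas j).mul (hτmeas l)) fun ω => mul01 (hτval j ω) (hτval l ω)).aestronglyMeasurable
      (int01 _ ((hTmeas i j).mul (hTmeas k l)) fun ω => mul01 (hTval i j ω) (hTval k l ω)).aestronglyMeasurable
  set a : Fin n → Fin n → ℝ := fun i j => p j * P i j with hadef
  -- pointwise rewriting of the difference
  have hsub : ∀ ω, ((∑ i, ∑ j, (τ j ω * T i j ω) • c i j) - ∑ i, ∑ j, (p j * P i j) • c i j)
      = ∑ x : Fin n × Fin n, (F x.1 x.2 ω - a x.1 x.2) • c x.1 x.2 := by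
    intro ω
    rw [Fintype.sum_prod_type, ← Finset.sum_sub_distrib]
    refine Finset.sum_congr rfl fun i _ => ?_
    rw [← Finset.sum_sub_distrib]
    refine Finset.sum_congr rfl fun j _ => ?_
    rw [← sub_smul]
  have hnorm : ∀ ω, ‖∑ x : Fin n × Fin n, (F x.1 x.2 ω - a x.1 x.2) • c x.1 x.2‖ ^ 2
      = ∑ x : Fin n × Fin n, ∑ y : Fin n × Fin n,
        (F x.1 x.2 ω - a x.1 x.2) * (F y.1 y.2 ω - a y.1 y.2) *
          (inner ℝ (c x.1 x.2) (c y.1 y.2) : ℝ) := by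
    intro ω
    rw [← real_inner_self_eq_norm_sq, sum_inner]
    refine Finset.sum_congr rfl fun x _ => ?_
    rw [inner_sum]
    refine Finset.sum_congr rfl fun y _ => ?_
    rw [real_inner_smul_left, real_inner_smul_right]; ring
  have hsubint : ∀ (x y : Fin n × Fin n) (C : ℝ),
      Integrable (fun ω => (F x.1 x.2 ω - a x.1 x.2) * (F y.1 y.2 ω - a y.1 y.2) * C) μ := by
    intro x y C
    apply Integrable.mul_const
    refine (integrable_const ((1 + |a x.1 x.2|) * (1 + |a y.1 y.2|))).mono'
      (((hFmeas _ _).sub measurable_const).mul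
        ((hFmeas _ _).sub measurable_const)).aestronglyMeasurable ?_
    refine Filter.Eventually.of_forall fun ω => ?_
    have hb : ∀ i j : Fin n, |F i j ω - a i j| ≤ 1 + |a i j| := by
      intro i j
      calc |F i j ω - a i j| ≤ |F i j ω| + |a i j| := abs_sub _ _
        _ ≤ 1 + |a i j| := by
            rcases hF01 i j ω with h | h <;> simp [h]
    rw [Real.norm_eq_abs, abs_mul]
    exact mul_le_mul (hb _ _) (hb _ _) (abs_nonneg _) (by positivity)
  have key : (∫ ω, ‖(∑ i, ∑ j, (τ j ω * T i j ω) • c i j) -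
        ∑ i, ∑ j, (p j * P i j) • c i j‖ ^ 2 ∂μ)
      = ∑ x : Fin n × Fin n, ∑ y : Fin n × Fin n,
          ((∫ ω, F x.1 x.2 ω * F y.1 y.2 ω ∂μ) - a x.1 x.2 * a y.1 y.2) *
            (inner ℝ (c x.1 x.2) (c y.1 y.2) : ℝ) := by
    rw [show (∫ ω, ‖(∑ i, ∑ j, (τ j ω * T i j ω) • c i j) -
        ∑ i, ∑ j, (p j * P i j) • c i j‖ ^ 2 ∂μ)
        = ∫ ω, ∑ x : Fin n × Fin n, ∑ y : Fin n × Fin n,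
          (F x.1 x.2 ω - a x.1 x.2) * (F y.1 y.2 ω - a y.1 y.2) *
            (inner ℝ (c x.1 x.2) (c y.1 y.2) : ℝ) ∂μ by
      congr 1; funext ω; rw [hsub ω, hnorm ω]]
    rw [integral_finset_sum _ fun x _ => integrable_finset_sum _ fun y _ => hsubint x y _]
    refine Finset.sum_congr rfl fun x _ => ?_
    rw [integral_finset_sum _ fun y _ => hsubint x y _]
    refine Finset.sum_congr rfl fun y _ => ?_
    set C : ℝ := (inner ℝ (c x.1 x.2) (c y.1 y.2) : ℝ) with hCdef
    have hexp : ∀ ω, (F x.1 x.2 ω - a x.1 x.2) * (F y.1 y.2 ω - a y.1 y.2) * C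
        = C * (F x.1 x.2 ω * F y.1 y.2 ω) - (C * a y.1 y.2) * F x.1 x.2 ω
          - (C * a x.1 x.2) * F y.1 y.2 ω + C * (a x.1 x.2 * a y.1 y.2) := by
      intro ω; ring
    simp only [hexp]
    have iFF : Integrable (fun ω => F x.1 x.2 ω * F y.1 y.2 ω) μ :=
      int01 _ ((hFmeas _ _).mul (hFmeas _ _)) fun ω => mul01 (hF01 _ _ ω) (hF01 _ _ ω)
    have i1 : Integrable (fun ω => C * (F x.1 x.2 ω * F y.1 y.2 ω)) μ := iFF.const_mul C
    have i2 : Integrable (fun ω => C * a y.1 y.2 * F x.1 x.2 ω) μ :=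
      (hFint x.1 x.2).const_mul _
    have i3 : Integrable (fun ω => C * a x.1 x.2 * F y.1 y.2 ω) μ :=
      (hFint y.1 y.2).const_mul _
    have i12 : Integrable (fun ω => C * (F x.1 x.2 ω * F y.1 y.2 ω)
        - C * a y.1 y.2 * F x.1 x.2 ω) μ := i1.sub i2
    have i123 : Integrable (fun ω => C * (F x.1 x.2 ω * F y.1 y.2 ω)
        - C * a y.1 y.2 * F x.1 x.2 ω - C * a x.1 x.2 * F y.1 y.2 ω) μ := i12.sub i3
    rw [integral_add i123 (integrable_const _), integral_sub i12 i3, integral_sub i1 i2,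
      integral_const_mul, integral_const_mul, integral_const_mul, integral_const,
      hMF, hMF, probReal_univ]
    simp only [ENNReal.toReal_one, smul_eq_mul, one_mul, hadef]
    ring
  have hterm : ∀ i j k l : Fin n,
      ((∫ ω, F i j ω * F k l ω ∂μ) - a i j * a k l) * (inner ℝ (c i j) (c k l) : ℝ)
      = (if l = j then p j * (1 - p j) * (P i j * P k l) * (inner ℝ (c i j) (c k l) : ℝ) else 0)
        + (if l = j ∧ k = i then p j * P i j * (1 - P i j) * ‖c i j‖ ^ 2 else 0)
        + (if k = j ∧ l = i ∧ ¬l = j then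
            p l * p j * (E l j - P l j * P j l) * (inner ℝ (c l j) (c j l) : ℝ) else 0) := by
    intro i j k l
    rw [hM, hEτ, hET]
    simp only [Prod.mk.injEq, hadef]
    by_cases hlj : l = j
    · subst hlj
      by_cases hki : k = i
      · subst hki
        rw [if_pos rfl, if_pos (⟨rfl, rfl⟩ : k = k ∧ l = l), if_pos rfl,
          if_pos (⟨rfl, rfl⟩ : l = l ∧ k = k),
          if_neg (fun h : k = l ∧ l = k ∧ ¬l = l => h.2.2 rfl),
          real_inner_self_eq_norm_sq]
        ring
      · rw [if_pos rfl, if_neg (fun h : k = i ∧ l = l => hki h.1),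
          if_neg (fun h : k = l ∧ l = i => hki (h.1.trans h.2)),
          if_pos rfl, if_neg (fun h : l = l ∧ k = i => hki h.2),
          if_neg (fun h : k = l ∧ l = i ∧ ¬l = l => h.2.2 rfl)]
        ring
    · by_cases hrec : k = j ∧ l = i
      · obtain ⟨h1, h2⟩ := hrec
        subst h1; subst h2
        rw [if_neg (fun h : k = l => hlj h.symm),
          if_neg (fun h : k = l ∧ l = k => hlj h.2),
          if_pos (⟨rfl, rfl⟩ : k = k ∧ l = l),
          if_neg hlj, if_neg (fun h : l = k ∧ k = l => hlj h.1),
          if_pos (⟨rfl, rfl, hlj⟩ : k = k ∧ l = l ∧ ¬l = k)]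
        ring
      · rw [if_neg (fun h : j = l => hlj h.symm),
          if_neg (fun h : k = i ∧ l = j => hlj h.2),
          if_neg hrec, if_neg hlj,
          if_neg (fun h : l = j ∧ k = i => hlj h.1),
          if_neg (fun h : k = j ∧ l = i ∧ ¬l = j => hrec ⟨h.1, h.2.1⟩)]
        ring
  rw [key,
    Finset.sum_congr rfl fun (x : Fin n × Fin n) _ =>
      Finset.sum_congr rfl fun (y : Fin n × Fin n) _ => hterm x.1 x.2 y.1 y.2]
  simp only [Finset.sum_add_distrib]
  have hnormexp : ∀ j : Fin n, ‖∑ i, P i j • c i j‖ ^ 2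
      = ∑ i, ∑ k, P i j * P k j * (inner ℝ (c i j) (c k j) : ℝ) := by
    intro j
    rw [← real_inner_self_eq_norm_sq, sum_inner]
    refine Finset.sum_congr rfl fun i _ => ?_
    rw [inner_sum]
    refine Finset.sum_congr rfl fun k _ => ?_
    rw [real_inner_smul_left, real_inner_smul_right]; ring
  congr 1
  · congr 1
    · -- first piece
      simp only [Fintype.sum_prod_type]
      rw [Finset.sum_comm]
      refine Finset.sum_congr rfl fun j _ => ?_
      rw [hnormexp j, Finset.mul_sum]
      refine Finset.sum_congr rfl fun i _ => ?_
      rw [Finset.mul_sum]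
      refine Finset.sum_congr rfl fun k _ => ?_
      rw [Finset.sum_ite_eq' Finset.univ j
        (fun l => p j * (1 - p j) * (P i j * P k l) * (inner ℝ (c i j) (c k l) : ℝ))]
      simp only [Finset.mem_univ, if_true]
      ring
    · -- second piece
      simp only [Fintype.sum_prod_type]
      refine Finset.sum_congr rfl fun i _ => Finset.sum_congr rfl fun j _ => ?_
      simp only [ite_and, Finset.sum_ite_eq', Finset.mem_univ, if_true]
  · -- third piece
    simp only [Fintype.sum_prod_type]
    refine Finset.sum_congr rfl fun i _ => ?_
    have step : ∀ j : Fin n, (∑ k, ∑ l, if k = j ∧ l = i ∧ ¬l = j then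
        p l * p j * (E l j - P l j * P j l) * (inner ℝ (c l j) (c j l) : ℝ) else 0)
        = if i = j then 0 else
            p i * p j * (E i j - P i j * P j i) * (inner ℝ (c i j) (c j i) : ℝ) := by
      intro j
      rw [Finset.sum_comm]
      simp only [ite_and, Finset.sum_ite_eq', Finset.mem_univ, if_true]
      rw [ite_not]
    rw [Finset.sum_congr rfl fun j _ => step j,
      ← Finset.sum_erase_add Finset.univ _ (Finset.mem_univ i)]
    simp only [eq_self_iff_true, ite_true, add_zero]
    refine Finset.sum_congr rfl fun b hb => ?_
    rw [if_neg (fun h : i = b => (Finset.ne_of_mem_erase hb) h.symm),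
      real_inner_comm (c i b) (c b i)]
end
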